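/- arXiv:2108.13227 — 3 statements merged into one kernel-verified Lean document; each statement's English description precedes it below -/
import Mathlib

section
/- Let P be the Type A_n root poset. The antichain cardinality statistic I ↦ #max(I) equals n/2 plus an ℝ-linear combination of the signed toggleability statistics T_p; hence its average along any rowmotion orbit is n/2. -/
open scoped Classical
open Finset

variable {P : Type*} [Fintype P] [PartialOrder P]

/-- `I` is an order ideal (downward-closed subset) of the finite poset `P`. -/
def IsIdeal (I : Finset P) : Prop := ∀ ⦃x y : P⦄, x ≤ y → y ∈ I → x ∈ I

/-- `p` is a minimal element of the complement `P \ I`. -/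
def CanTogIn (I : Finset P) (p : P) : Prop := p ∉ I ∧ ∀ q, q < p → q ∈ I

/-- `p` is a maximal element of `I`. -/
def CanTogOut (I : Finset P) (p : P) : Prop := p ∈ I ∧ ∀ q, p < q → q ∉ I

/-- Rowmotion: the order ideal generated by the minimal elements of `P \ I`. -/
noncomputable def rowmotion (I : Finset P) : Finset P :=
  univ.filter fun x => ∃ y, CanTogIn I y ∧ x ≤ y

/-- Toggleability statistic `T⁺_p`. -/
noncomputable def Tin (p : P) (I : Finset P) : ℝ := if CanTogIn I p then 1 else 0

/-- Toggleability statistic `T⁻_p`. -/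
noncomputable def Tout (p : P) (I : Finset P) : ℝ := if CanTogOut I p then 1 else 0

/-- Signed toggleability statistic `T_p = T⁺_p - T⁻_p`. -/
noncomputable def Tsgn (p : P) (I : Finset P) : ℝ := Tin p I - Tout p I

/-- The Type `A_n` root poset, realized as `{(i,j) : 1 ≤ i,j ≤ n, i+j ≥ n+1}`
with componentwise order (coordinates taken in `Fin (n+1)`, i.e. `0,…,n`). -/
abbrev RootA (n : ℕ) :=
  {p : Fin (n + 1) × Fin (n + 1) // 1 ≤ p.1.val ∧ 1 ≤ p.2.val ∧ n + 1 ≤ p.1.val + p.2.val}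

/-!
Give `q = (i, j)` the rank `r q = i + j - n - 1`. The statistic
`∑_{q ∈ max I} (r q + 1) - ∑_{q ∈ min (P \ I)} (r q - 1)` equals `n` on every order ideal `I`.
On `∅` it counts the `n` minimal elements. Adding a minimal element `p` of `P \ J` to an ideal `J`
changes it by `r p * (2 - A - B)`, where `A` counts the lower covers of `p` that were maximal in `J`
and `B` the upper covers that become minimal in `P \ (J ∪ {p})`; for `r p > 0`, `A + B = 2`
because `(i - 1, j)` is maximal in `J` exactly when `(i, j + 1)` is not minimal outside `J ∪ {p}`
(both are decided by whether `(i - 1, j + 1) ∈ J`), and likewise for `(i, j - 1)` and `(i + 1, j)`.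

Halving this identity gives `#max I = n / 2 + ∑_q (r q - 1) / 2 * T_q(I)`. Since
`max (rowmotion I) = min (P \ I)`, each `T_q` telescopes to `0` along a rowmotion orbit.
-/

section Toggles

omit [Fintype P]

variable {J : Finset P} {p q : P}

theorem CanTogOut.covBy (hq : CanTogOut J q) (hp : CanTogIn J p) (hqp : q < p) : q ⋖ p :=
  ⟨hqp, fun r hqr hrp => hq.2 r hqr (hp.2 r hrp)⟩

variable [DecidableEq P]

theorem IsIdeal.induction {motive : Finset P → Prop} (empty : motive ∅)
    (insert : ∀ J p, IsIdeal J → CanTogIn J p → motive J → motive (insert p J)) :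
    ∀ I, IsIdeal I → motive I := by
  intro I
  induction I using Finset.strongInduction with
  | H I ih =>
    intro hI
    obtain rfl | hne := I.eq_empty_or_nonempty
    · exact empty
    obtain ⟨p, hpI, hpmax⟩ := I.exists_maximal hne
    have hJ : IsIdeal (I.erase p) := fun x y hxy hy => by
      refine mem_erase.2 ⟨?_, hI hxy (mem_of_mem_erase hy)⟩
      rintro rfl
      exact ne_of_mem_erase hy (le_antisymm (hpmax (mem_of_mem_erase hy) hxy) hxy)
    have hp : CanTogIn (I.erase p) p :=
      ⟨notMem_erase p I, fun q hq => mem_erase.2 ⟨hq.ne, hI hq.le hpI⟩⟩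
    simpa [insert_erase hpI] using insert _ _ hJ hp (ih _ (erase_ssubset hpI) hJ)

theorem canTogOut_insert_iff (hJ : IsIdeal J) (hp : CanTogIn J p) :
    CanTogOut (insert p J) q ↔ q = p ∨ CanTogOut J q ∧ ¬q < p := by
  constructor
  · rintro ⟨hq, hmax⟩
    refine (mem_insert.1 hq).imp id fun hqJ => ⟨⟨hqJ, fun r hqr hr => ?_⟩, fun hqp => ?_⟩
    · exact hmax r hqr (mem_insert_of_mem hr)
    · exact hmax p hqp (mem_insert_self p J)
  · rintro (rfl | ⟨⟨hqJ, hmax⟩, hqp⟩)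
    · refine ⟨mem_insert_self q J, fun r hqr hr => ?_⟩
      rcases mem_insert.1 hr with rfl | hrJ
      · exact lt_irrefl r hqr
      · exact hp.1 (hJ hqr.le hrJ)
    · refine ⟨mem_insert_of_mem hqJ, fun r hqr hr => ?_⟩
      rcases mem_insert.1 hr with rfl | hrJ
      · exact hqp hqr
      · exact hmax r hqr hrJ

theorem canTogIn_iff_canTogIn_insert (hp : CanTogIn J p) :
    CanTogIn J q ↔ q = p ∨ CanTogIn (insert p J) q ∧ ¬p < q := by
  constructor
  · intro hq
    refine or_iff_not_imp_left.2 fun hqp => ⟨⟨?_, fun r hrq => mem_insert_of_mem (hq.2 r hrq)⟩,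
      fun hpq => hp.1 (hq.2 p hpq)⟩
    rintro hq'
    rcases mem_insert.1 hq' with rfl | hqJ
    exacts [hqp rfl, hq.1 hqJ]
  · rintro (rfl | ⟨⟨hq, hmin⟩, hpq⟩)
    · exact hp
    refine ⟨fun hqJ => hq (mem_insert_of_mem hqJ), fun r hrq => ?_⟩
    rcases mem_insert.1 (hmin r hrq) with rfl | hrJ
    exacts [absurd hrq hpq, hrJ]

theorem CanTogIn.covBy_of_insert (hJ : IsIdeal J) (hp : p ∉ J) (hq : CanTogIn (insert p J) q)
    (hpq : p < q) : p ⋖ q := by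
  refine ⟨hpq, fun r hpr hrq => ?_⟩
  rcases mem_insert.1 (hq.2 r hrq) with rfl | hrJ
  exacts [lt_irrefl r hpr, hp (hJ hpr.le hrJ)]

end Toggles

section Rowmotion

variable {I J : Finset P} {p : P}

theorem rowmotion_isIdeal (I : Finset P) : IsIdeal (rowmotion I) := by
  intro x y hxy hy
  simp only [rowmotion, mem_filter, mem_univ, true_and] at hy ⊢
  obtain ⟨z, hz, hyz⟩ := hy
  exact ⟨z, hz, hxy.trans hyz⟩

theorem IsIdeal.iterate_rowmotion (hI : IsIdeal I) : ∀ k, IsIdeal (rowmotion^[k] I)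
  | 0 => hI
  | k + 1 => by rw [Function.iterate_succ_apply']; exact rowmotion_isIdeal _

theorem canTogOut_rowmotion_iff : CanTogOut (rowmotion I) p ↔ CanTogIn I p := by
  have mem_rowmotion : ∀ x, x ∈ rowmotion I ↔ ∃ y, CanTogIn I y ∧ x ≤ y := by
    simp [rowmotion]
  constructor
  · rintro ⟨hp, hmax⟩
    obtain ⟨y, hy, hpy⟩ := (mem_rowmotion p).1 hp
    obtain rfl | hlt := hpy.eq_or_lt
    · exact hy
    · exact absurd ((mem_rowmotion y).2 ⟨y, hy, le_rfl⟩) (hmax y hlt)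
  · intro hp
    refine ⟨(mem_rowmotion p).2 ⟨p, hp, le_rfl⟩, fun q hpq hq => ?_⟩
    obtain ⟨y, hy, hqy⟩ := (mem_rowmotion q).1 hq
    exact hp.1 (hy.2 p (hpq.trans_le hqy))

theorem Tsgn_eq_Tout_rowmotion_sub (p : P) (I : Finset P) :
    Tsgn p I = Tout p (rowmotion I) - Tout p I := by
  simp only [Tsgn, Tin, Tout, canTogOut_rowmotion_iff]

theorem sum_range_Tsgn_iterate_rowmotion (p : P) {N : ℕ} (hN : rowmotion^[N] I = I) :
    ∑ k ∈ range N, Tsgn p (rowmotion^[k] I) = 0 := by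
  simp_rw [Tsgn_eq_Tout_rowmotion_sub, ← Function.iterate_succ_apply' rowmotion]
  rw [sum_range_sub (fun k => Tout p (rowmotion^[k] I)), hN, Function.iterate_zero_apply,
    sub_self]

theorem sum_range_iterate_rowmotion_of_eq_add_sum_Tsgn {f : Finset P → ℝ} {c : ℝ} (w : P → ℝ)
    (hf : ∀ I, IsIdeal I → f I = c + ∑ p, w p * Tsgn p I) (hI : IsIdeal I) {N : ℕ}
    (hN : rowmotion^[N] I = I) :
    ∑ k ∈ range N, f (rowmotion^[k] I) = N * c := by
  rw [sum_congr rfl fun k _ => hf _ (hI.iterate_rowmotion k), sum_add_distrib, sum_comm]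
  simp [← mul_sum, sum_range_Tsgn_iterate_rowmotion _ hN]

variable [DecidableEq P]

noncomputable def toggleSum (a b : P → ℝ) (I : Finset P) : ℝ :=
  ∑ q, (a q * Tout q I - b q * Tin q I)

theorem toggleSum_insert (a b : P → ℝ) (hJ : IsIdeal J) (hp : CanTogIn J p) :
    toggleSum a b (insert p J) = toggleSum a b J + (a p + b p)
      - ∑ q ∈ univ.filter (fun q => q < p ∧ CanTogOut J q), a q
      - ∑ q ∈ univ.filter (fun q => p < q ∧ CanTogIn (insert p J) q), b q := by
  have hOut : ∀ q, a q * Tout q (insert p J) + (if q < p ∧ CanTogOut J q then a q else 0)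
      = a q * Tout q J + (if q = p then a q else 0) := by
    intro q
    have hp' : ¬CanTogOut J p := fun h => hp.1 h.1
    simp only [Tout, canTogOut_insert_iff hJ hp]
    split_ifs <;> simp_all
  have hIn : ∀ q, b q * Tin q J + (if p < q ∧ CanTogIn (insert p J) q then b q else 0)
      = b q * Tin q (insert p J) + (if q = p then b q else 0) := by
    intro q
    have hp' : ¬CanTogIn (insert p J) p := fun h => h.1 (mem_insert_self p J)
    simp only [Tin, canTogIn_iff_canTogIn_insert hp (q := q)]
    split_ifs <;> simp_all
  have hOut' := sum_congr rfl fun q (_ : q ∈ univ) => hOut q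
  have hIn' := sum_congr rfl fun q (_ : q ∈ univ) => hIn q
  simp only [sum_add_distrib, sum_ite_eq', mem_univ, if_true, ← sum_filter] at hOut' hIn'
  simp only [toggleSum, sum_sub_distrib]
  linarith

end Rowmotion

namespace RootA

variable {n : ℕ}

def x (p : RootA n) : ℕ := p.1.1

def y (p : RootA n) : ℕ := p.1.2

def rank (p : RootA n) : ℕ := p.x + p.y - (n + 1)

theorem coord_bounds (p : RootA n) : p.x ≤ n ∧ p.y ≤ n ∧ n + 1 ≤ p.x + p.y :=
  ⟨Nat.lt_succ_iff.1 p.1.1.isLt, Nat.lt_succ_iff.1 p.1.2.isLt, p.2.2.2⟩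

theorem rank_add_eq_x_add_y (p : RootA n) : p.rank + (n + 1) = p.x + p.y := by
  have := coord_bounds p
  unfold rank; omega

theorem le_iff {p q : RootA n} : p ≤ q ↔ p.x ≤ q.x ∧ p.y ≤ q.y := Iff.rfl

theorem eq_iff {p q : RootA n} : p = q ↔ p.x = q.x ∧ p.y = q.y := by
  rw [Subtype.ext_iff, Prod.ext_iff, Fin.ext_iff, Fin.ext_iff]; rfl

theorem lt_iff {p q : RootA n} : p < q ↔ p.x ≤ q.x ∧ p.y ≤ q.y ∧ p.x + p.y < q.x + q.y := by
  rw [lt_iff_le_and_ne, le_iff, Ne, eq_iff]; omega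

def mk (i j : ℕ) (hi : i ≤ n) (hj : j ≤ n) (h : n + 1 ≤ i + j) : RootA n :=
  ⟨(⟨i, by omega⟩, ⟨j, by omega⟩), by simp only; omega, by simp only; omega, h⟩

@[simp] theorem x_mk (i j : ℕ) (hi hj h) : (mk (n := n) i j hi hj h).x = i := rfl

@[simp] theorem y_mk (i j : ℕ) (hi hj h) : (mk (n := n) i j hi hj h).y = j := rfl

theorem exists_x_y (i j : ℕ) (hi : i ≤ n) (hj : j ≤ n) (h : n + 1 ≤ i + j) :
    ∃ z : RootA n, z.x = i ∧ z.y = j :=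
  ⟨mk i j hi hj h, rfl, rfl⟩

theorem covBy_iff {p q : RootA n} : q ⋖ p ↔ q ≤ p ∧ q.x + q.y + 1 = p.x + p.y := by
  constructor
  · intro h
    obtain ⟨hx, hy, hs⟩ := lt_iff.1 h.lt
    refine ⟨h.le, by_contra fun hne => ?_⟩
    have := coord_bounds p
    have := coord_bounds q
    by_cases hqx : q.x < p.x
    · exact h.2 (c := mk (q.x + 1) q.y (by omega) (by omega) (by omega))
        (lt_iff.2 (by simp)) (lt_iff.2 (by simp only [x_mk, y_mk]; omega))
    · exact h.2 (c := mk q.x (q.y + 1) (by omega) (by omega) (by omega))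
        (lt_iff.2 (by simp)) (lt_iff.2 (by simp only [x_mk, y_mk]; omega))
  · rintro ⟨hle, hs⟩
    rw [le_iff] at hle
    exact ⟨lt_iff.2 (by omega), fun r hqr hrp => by rw [lt_iff] at hqr hrp; omega⟩

theorem rank_add_one_of_covBy {p q : RootA n} (h : q ⋖ p) : q.rank + 1 = p.rank := by
  have := covBy_iff.1 h
  have := q.rank_add_eq_x_add_y
  have := p.rank_add_eq_x_add_y
  omega

theorem canTogIn_empty_iff {q : RootA n} : CanTogIn ∅ q ↔ q.rank = 0 := by
  have := coord_bounds q
  have := q.rank_add_eq_x_add_y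
  constructor
  · rintro ⟨-, hmin⟩
    by_contra hq
    exact notMem_empty _
      (hmin (mk (q.x - 1) q.y (by omega) (by omega) (by omega)) (lt_iff.2 (by simp; omega)))
  · intro hq
    refine ⟨notMem_empty q, fun r hrq => ?_⟩
    have := coord_bounds r
    rw [lt_iff] at hrq
    omega

theorem card_rank_eq_zero : #(univ.filter fun q : RootA n => q.rank = 0) = n := by
  refine (card_bij (fun q _ => q.x - 1) (fun q hq => ?_) (fun q₁ hq₁ q₂ hq₂ h => ?_)
    fun i hi => ?_).trans (card_range n)
  · have := coord_bounds q
    have := q.rank_add_eq_x_add_y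
    simp only [mem_filter, mem_univ, true_and] at hq
    simp only [mem_range]
    omega
  · have := coord_bounds q₁
    have := coord_bounds q₂
    have := q₁.rank_add_eq_x_add_y
    have := q₂.rank_add_eq_x_add_y
    simp only [mem_filter, mem_univ, true_and] at hq₁ hq₂ h
    rw [eq_iff]
    omega
  · rw [mem_range] at hi
    obtain ⟨r, hrx, hry⟩ := exists_x_y (n := n) (i + 1) (n - i) (by omega) (by omega)
      (by omega)
    have := r.rank_add_eq_x_add_y
    exact ⟨r, by simp only [mem_filter, mem_univ, true_and]; omega, by omega⟩

theorem card_covBy_eq_two (p : RootA n) (hp : p.rank ≠ 0) : #(univ.filter fun q => q ⋖ p) = 2 := by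
  have := coord_bounds p
  have := p.rank_add_eq_x_add_y
  rw [card_eq_two]
  refine ⟨mk (p.x - 1) p.y (by omega) (by omega) (by omega),
    mk p.x (p.y - 1) (by omega) (by omega) (by omega), by rw [Ne, eq_iff]; simp only [x_mk, y_mk]; omega, ?_⟩
  ext q
  have := coord_bounds q
  simp only [mem_filter, mem_univ, true_and, mem_insert, mem_singleton, covBy_iff, le_iff,
    eq_iff, x_mk, y_mk]
  omega

variable {I J : Finset (RootA n)} {p : RootA n}

theorem not_canTogOut_of_canTogIn_insert {q x : RootA n}
    (hq : CanTogIn (insert p J) q) (hpq : p ⋖ q) (hxp : x ⋖ p)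
    (hxq : x.x + q.y = p.x + p.y ∧ x.y + q.x = p.x + p.y) : ¬CanTogOut J x := by
  intro hx
  obtain ⟨hpq, hpq'⟩ := covBy_iff.1 hpq
  obtain ⟨hxp, hxp'⟩ := covBy_iff.1 hxp
  rw [le_iff] at hpq hxp
  have := coord_bounds p
  have := coord_bounds q
  obtain ⟨z, hzx, hzy⟩ := exists_x_y (n := n) (q.x + p.y - q.y) (q.y + p.x - q.x)
    (by omega) (by omega) (by omega)
  have hzJ : z ∈ J := by
    rcases mem_insert.1 (hq.2 z (lt_iff.2 (by omega))) with h | h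
    · rw [eq_iff] at h
      omega
    · exact h
  exact hx.2 z (lt_iff.2 (by omega)) hzJ

theorem exists_canTogIn_insert_of_not_canTogOut (hJ : IsIdeal J) (hp : CanTogIn J p)
    {x : RootA n} (hxp : x ⋖ p) (hx : ¬CanTogOut J x) :
    ∃ q, (p < q ∧ CanTogIn (insert p J) q) ∧ x.x + q.y = p.x + p.y ∧ x.y + q.x = p.x + p.y := by
  obtain ⟨r, hxr, hrJ⟩ : ∃ r, x < r ∧ r ∈ J := by
    by_contra! h
    exact hx ⟨hp.2 x hxp.lt, h⟩
  have hpr : ¬p ≤ r := fun h => hp.1 (hJ h hrJ)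
  rw [covBy_iff, le_iff] at hxp
  rw [lt_iff] at hxr
  rw [le_iff] at hpr
  have := coord_bounds p
  have := coord_bounds r
  obtain ⟨q, hqx, hqy⟩ := exists_x_y (n := n) (p.x + p.y - x.y) (p.x + p.y - x.x)
    (by omega) (by omega) (by omega)
  have hpq : p < q := lt_iff.2 (by omega)
  refine ⟨q, ⟨hpq, fun hq => ?_, fun s hsq => ?_⟩, by omega⟩
  · rcases mem_insert.1 hq with h | h
    · rw [eq_iff] at h
      omega
    · exact hp.1 (hJ hpq.le h)
  · by_cases hsp : s ≤ p
    · rcases hsp.eq_or_lt with rfl | h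
      exacts [mem_insert_self _ _, mem_insert_of_mem (hp.2 s h)]
    · rw [lt_iff] at hsq
      rw [le_iff] at hsp
      exact mem_insert_of_mem (hJ (le_iff.2 (by omega)) hrJ)

/-- The bijection is the reflection `(a, b) ↦ (i + j - b, i + j - a)` in the antidiagonal through
`p = (i, j)`, sending the upper cover `(i, j + 1)` to the lower cover `(i - 1, j)` and
`(i + 1, j)` to `(i, j - 1)`. -/
theorem card_canTogIn_insert_eq (hJ : IsIdeal J) (hp : CanTogIn J p) (hr : p.rank ≠ 0) :
    #(univ.filter fun q => p < q ∧ CanTogIn (insert p J) q)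
      = #((univ.filter (· ⋖ p)).filter fun x => ¬CanTogOut J x) := by
  have := coord_bounds p
  have := p.rank_add_eq_x_add_y
  have cover : ∀ q ∈ univ.filter (fun q => p < q ∧ CanTogIn (insert p J) q),
      p ⋖ q ∧ p.x ≤ q.x ∧ p.y ≤ q.y ∧ p.x + p.y + 1 = q.x + q.y ∧ q.x ≤ n ∧ q.y ≤ n := by
    intro q hq
    rw [mem_filter] at hq
    have hpq := hq.2.2.covBy_of_insert hJ hp.1 hq.2.1
    obtain ⟨hle, hsum⟩ := covBy_iff.1 hpq
    exact ⟨hpq, hle.1, hle.2, hsum, (coord_bounds q).1, (coord_bounds q).2.1⟩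
  refine card_bij (fun q hq => mk (p.x + p.y - q.y) (p.x + p.y - q.x)
    (by have := cover q hq; omega) (by have := cover q hq; omega)
    (by have := cover q hq; omega)) (fun q hq => ?_) (fun q₁ hq₁ q₂ hq₂ h => ?_) fun x hx => ?_
  · obtain ⟨hpq, h₁, h₂, h₃, h₄, h₅⟩ := cover q hq
    simp only [mem_filter, mem_univ, true_and] at hq ⊢
    refine ⟨?cov, not_canTogOut_of_canTogIn_insert hq.2 hpq ?cov ?_⟩
    case cov =>
      simp only [covBy_iff, le_iff, x_mk, y_mk]
      omega
    simp only [x_mk, y_mk]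
    omega
  · have := cover q₁ hq₁
    have := cover q₂ hq₂
    rw [eq_iff] at h ⊢
    simp only [x_mk, y_mk] at h
    omega
  · simp only [mem_filter, mem_univ, true_and] at hx
    obtain ⟨q, hq, hxq⟩ := exists_canTogIn_insert_of_not_canTogOut hJ hp hx.1 hx.2
    refine ⟨q, by simpa using hq, ?_⟩
    have := covBy_iff.1 hx.1
    rw [eq_iff]
    simp only [x_mk, y_mk]
    omega

theorem card_canTogOut_add_card_canTogIn_insert (hJ : IsIdeal J) (hp : CanTogIn J p)
    (hr : p.rank ≠ 0) :
    #(univ.filter fun q => q < p ∧ CanTogOut J q)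
      + #(univ.filter fun q => p < q ∧ CanTogIn (insert p J) q) = 2 := by
  have hA : univ.filter (fun q => q < p ∧ CanTogOut J q)
      = (univ.filter (· ⋖ p)).filter (CanTogOut J) := by
    ext q
    simp only [mem_filter, mem_univ, true_and]
    exact ⟨fun h => ⟨h.2.covBy hp h.1, h.2⟩, fun h => ⟨h.1.lt, h.2⟩⟩
  rw [hA, card_canTogIn_insert_eq hJ hp hr, card_filter_add_card_filter_not, card_covBy_eq_two p hr]

noncomputable def rankToggleSum (I : Finset (RootA n)) : ℝ :=
  toggleSum (fun q : RootA n => (q.rank : ℝ) + 1) (fun q => (q.rank : ℝ) - 1) I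

theorem rankToggleSum_insert (hJ : IsIdeal J) (hp : CanTogIn J p) :
    rankToggleSum (insert p J) = rankToggleSum J := by
  rw [rankToggleSum, rankToggleSum, toggleSum_insert _ _ hJ hp]
  have hA : ∀ q ∈ univ.filter (fun q => q < p ∧ CanTogOut J q), (q.rank : ℝ) + 1 = p.rank := by
    intro q hq
    rw [mem_filter] at hq
    exact_mod_cast rank_add_one_of_covBy (hq.2.2.covBy hp hq.2.1)
  have hB : ∀ q ∈ univ.filter (fun q => p < q ∧ CanTogIn (insert p J) q),
      (q.rank : ℝ) - 1 = p.rank := by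
    intro q hq
    rw [mem_filter] at hq
    have := rank_add_one_of_covBy (hq.2.2.covBy_of_insert hJ hp.1 hq.2.1)
    rw [← this]
    push_cast
    ring
  rw [sum_congr rfl hA, sum_congr rfl hB, sum_const, sum_const, nsmul_eq_mul, nsmul_eq_mul]
  obtain hr | hr := eq_or_ne p.rank 0
  · simp [hr]
  · have hcard : (#(univ.filter fun q => q < p ∧ CanTogOut J q) : ℝ)
        + #(univ.filter fun q => p < q ∧ CanTogIn (insert p J) q) = 2 := by
      exact_mod_cast card_canTogOut_add_card_canTogIn_insert hJ hp hr
    linear_combination (-(p.rank : ℝ)) * hcard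

theorem rankToggleSum_empty : rankToggleSum (∅ : Finset (RootA n)) = n := by
  have h : ∀ q : RootA n, ((q.rank : ℝ) + 1) * Tout q ∅ - ((q.rank : ℝ) - 1) * Tin q ∅
      = if q.rank = 0 then 1 else 0 := by
    intro q
    have : ¬CanTogOut (∅ : Finset (RootA n)) q := fun h => notMem_empty q h.1
    by_cases hq : q.rank = 0 <;> simp [Tout, Tin, this, canTogIn_empty_iff, hq]
  simp only [rankToggleSum, toggleSum, h, sum_boole, card_rank_eq_zero]

theorem rankToggleSum_eq (hI : IsIdeal I) : rankToggleSum I = n :=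
  IsIdeal.induction (motive := fun I => rankToggleSum I = n) rankToggleSum_empty
    (fun _ _ hJ hp ih => (rankToggleSum_insert hJ hp).trans ih) I hI

theorem card_canTogOut_eq (hI : IsIdeal I) :
    (#(univ.filter fun p => CanTogOut I p) : ℝ)
      = n / 2 + ∑ p, ((p.rank : ℝ) - 1) / 2 * Tsgn p I := by
  have hcard : (#(univ.filter fun p => CanTogOut I p) : ℝ) = ∑ p, Tout p I := by
    simp [Tout, sum_boole]
  rw [hcard, ← rankToggleSum_eq hI, rankToggleSum, toggleSum, sum_div, ← sum_add_distrib]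
  refine sum_congr rfl fun p _ => ?_
  simp only [Tsgn]
  ring

end RootA

theorem rootA_antichain_card_homomesy_general (n : ℕ) :
    ∃ c : RootA n → ℝ,
      (∀ I : Finset (RootA n), IsIdeal I →
        ((univ.filter fun p : RootA n => CanTogOut I p).card : ℝ)
          = (n : ℝ) / 2 + ∑ p : RootA n, c p * Tsgn p I) ∧
      (∀ I : Finset (RootA n), IsIdeal I → ∀ N : ℕ, 0 < N → rowmotion^[N] I = I →
        ∑ k ∈ Finset.range N,
            ((univ.filter fun p : RootA n => CanTogOut (rowmotion^[k] I) p).card : ℝ)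
          = N * ((n : ℝ) / 2)) :=
  ⟨_, fun _ => RootA.card_canTogOut_eq, fun _ hI _ _ hN =>
    sum_range_iterate_rowmotion_of_eq_add_sum_Tsgn _ (fun _ => RootA.card_canTogOut_eq) hI hN⟩

/-- On the Type `A_n` root poset, the antichain cardinality statistic `I ↦ #max(I)` is
`n/2` plus a linear combination of signed toggleability statistics; hence its average
along every rowmotion orbit is `n/2`. -/
theorem rootA_antichain_card_homomesy (n : ℕ) (hn : 1 ≤ n) :
    ∃ c : RootA n → ℝ,
      (∀ I : Finset (RootA n), IsIdeal I →
        ((univ.filter fun p : RootA n => CanTogOut I p).card : ℝ)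
          = (n : ℝ) / 2 + ∑ p : RootA n, c p * Tsgn p I) ∧
      (∀ I : Finset (RootA n), IsIdeal I → ∀ N : ℕ, 0 < N → rowmotion^[N] I = I →
        ∑ k ∈ Finset.range N,
            ((univ.filter fun p : RootA n => CanTogOut (rowmotion^[k] I) p).card : ℝ)
          = N * ((n : ℝ) / 2)) :=
  rootA_antichain_card_homomesy_general n
end

section
/- Let P be the shifted staircase poset {(i,j) : 1 ≤ i ≤ j ≤ n} with componentwise order. For every order ideal I of P, exactly one element (i,i) on the main diagonal satisfies T⁺_{i,i}(I) + T⁻_{i,i}(I) = 1; that is, Σ_{i=1}^{n} (T⁺_{i,i}(I) + T⁻_{i,i}(I)) = 1. -/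
open scoped Classical
open Finset

variable {P : Type*} [Fintype P] [PartialOrder P]

/-- The shifted staircase poset `{(i,j) : 1 ≤ i ≤ j ≤ n}` with componentwise order
(coordinates taken in `Fin (n+1)`, i.e. `0,…,n`). -/
abbrev ShiftedStaircase (n : ℕ) :=
  {p : Fin (n + 1) × Fin (n + 1) // 1 ≤ p.1.val ∧ p.1.val ≤ p.2.val}

namespace SSAux

variable {n : ℕ}

/-- Constructor for elements of the shifted staircase from natural numbers. -/
def selt (n a b : ℕ) (h1 : 1 ≤ a) (hab : a ≤ b) (h2 : b ≤ n) : ShiftedStaircase n :=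
  ⟨(⟨a, by omega⟩, ⟨b, by omega⟩), ⟨h1, hab⟩⟩

lemma ss_le_iff {p q : ShiftedStaircase n} :
    p ≤ q ↔ p.1.1.val ≤ q.1.1.val ∧ p.1.2.val ≤ q.1.2.val := Iff.rfl

lemma ss_eq_iff {p q : ShiftedStaircase n} :
    p = q ↔ p.1.1.val = q.1.1.val ∧ p.1.2.val = q.1.2.val := by
  simp [Subtype.ext_iff, Prod.ext_iff, Fin.ext_iff]

lemma ss_lt_iff {p q : ShiftedStaircase n} :
    p < q ↔ (p.1.1.val ≤ q.1.1.val ∧ p.1.2.val ≤ q.1.2.val) ∧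
      ¬(p.1.1.val = q.1.1.val ∧ p.1.2.val = q.1.2.val) := by
  rw [lt_iff_le_and_ne, ss_le_iff]
  simp only [Ne, ss_eq_iff]

@[simp] lemma selt_fst (a b : ℕ) (h1 hab h2) : (selt n a b h1 hab h2).1.1.val = a := rfl
@[simp] lemma selt_snd (a b : ℕ) (h1 hab h2) : (selt n a b h1 hab h2).1.2.val = b := rfl

lemma bounds (p : ShiftedStaircase n) :
    1 ≤ p.1.1.val ∧ p.1.1.val ≤ p.1.2.val ∧ p.1.2.val ≤ n := by
  refine ⟨p.2.1, p.2.2, ?_⟩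
  have := p.1.2.isLt; omega

lemma diag_val {q : ShiftedStaircase n} (hq : q.1.1 = q.1.2) : q.1.1.val = q.1.2.val := by
  rw [hq]

lemma diag_eq (q : ShiftedStaircase n) (hq : q.1.1 = q.1.2)
    (h1 : 1 ≤ q.1.1.val) (h2 : q.1.1.val ≤ n) :
    q = selt n q.1.1.val q.1.1.val h1 le_rfl h2 := by
  rw [ss_eq_iff]
  exact ⟨rfl, (diag_val hq).symm⟩

/-- The key case analysis: given the diagonal cut `k`, there is exactly one
diagonal element that can be toggled. -/
theorem key (I : Finset (ShiftedStaircase n)) (hI : IsIdeal I) (hn : 1 ≤ n)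
    (k : ℕ) (hkn : k ≤ n)
    (hmem : ∀ (m : ℕ) (h1 : 1 ≤ m) (h2 : m ≤ n), (selt n m m h1 le_rfl h2 ∈ I ↔ m ≤ k)) :
    ∃ p₀ : ShiftedStaircase n, p₀.1.1 = p₀.1.2 ∧ (Tin p₀ I + Tout p₀ I = 1) ∧
      ∀ q : ShiftedStaircase n, q.1.1 = q.1.2 → q ≠ p₀ → Tin q I + Tout q I = 0 := by
  classical
  -- a diagonal element is in I iff its value ≤ k
  have memI : ∀ (q : ShiftedStaircase n), q.1.1 = q.1.2 → (q ∈ I ↔ q.1.1.val ≤ k) := by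
    intro q hq
    obtain ⟨h1, _, h3⟩ := bounds q
    have h2 : q.1.1.val ≤ n := by have := bounds q; omega
    rw [diag_eq q hq h1 h2]; exact hmem _ h1 h2
  -- L1 : value < k → ¬ CanTogOut
  have L1 : ∀ (q : ShiftedStaircase n), q.1.1 = q.1.2 → q.1.1.val < k →
      ¬ CanTogOut I q := by
    intro q hq hmk ⟨_, hmax⟩
    obtain ⟨hb1, _, _⟩ := bounds q
    have hvv := diag_val hq
    set m := q.1.1.val with hm
    have h1' : 1 ≤ m + 1 := by omega
    have h2' : m + 1 ≤ n := by omega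
    refine hmax (selt n (m+1) (m+1) h1' le_rfl h2') ?_ ((hmem (m+1) h1' h2').2 (by omega))
    rw [ss_lt_iff]; simp [← hm]; omega
  -- L2 : value ≤ k → ¬ CanTogIn
  have L2 : ∀ (q : ShiftedStaircase n), q.1.1 = q.1.2 → q.1.1.val ≤ k →
      ¬ CanTogIn I q := by
    intro q hq hmk ⟨hnotin, _⟩
    exact hnotin ((memI q hq).2 hmk)
  -- L3 : value > k → ¬ CanTogOut
  have L3 : ∀ (q : ShiftedStaircase n), q.1.1 = q.1.2 → k < q.1.1.val →
      ¬ CanTogOut I q := by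
    intro q hq hmk ⟨hin, _⟩
    rw [memI q hq] at hin; omega
  -- L4 : value > k + 1 → ¬ CanTogIn
  have L4 : ∀ (q : ShiftedStaircase n), q.1.1 = q.1.2 → k + 1 < q.1.1.val →
      ¬ CanTogIn I q := by
    intro q hq hmk ⟨_, hmin⟩
    obtain ⟨_, _, hb3⟩ := bounds q
    have hvv := diag_val hq
    have h1' : 1 ≤ k + 1 := by omega
    have h2' : k + 1 ≤ n := by omega
    have := hmin (selt n (k+1) (k+1) h1' le_rfl h2')
      (by rw [ss_lt_iff]; simp; omega)
    rw [hmem (k+1) h1' h2'] at this; omega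
  have one_of : ∀ (q : ShiftedStaircase n),
      (CanTogIn I q ∧ ¬ CanTogOut I q) ∨ (¬ CanTogIn I q ∧ CanTogOut I q) →
      Tin q I + Tout q I = 1 := by
    rintro q (⟨h1, h2⟩ | ⟨h1, h2⟩) <;> simp [Tin, Tout, h1, h2]
  have zero_of : ∀ (q : ShiftedStaircase n),
      ¬ CanTogIn I q → ¬ CanTogOut I q → Tin q I + Tout q I = 0 := by
    intro q h1 h2
    simp [Tin, Tout, h1, h2]
  -- main case split
  rcases Nat.eq_zero_or_pos k with hk0 | hkpos
  · -- k = 0 : toggle in at (1,1)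
    subst hk0
    refine ⟨selt n 1 1 le_rfl le_rfl hn, rfl, ?_, ?_⟩
    · apply one_of
      left
      refine ⟨⟨?_, ?_⟩, L3 _ rfl (by simp)⟩
      · rw [hmem 1 le_rfl hn]; omega
      · intro q hq
        exfalso
        rw [ss_lt_iff] at hq
        obtain ⟨hb1, hb2, _⟩ := bounds q
        simp at hq
        omega
    · intro q hq hne
      obtain ⟨hb1, hb2, hb3⟩ := bounds q
      have hvv := diag_val hq
      have hval : q.1.1.val ≠ 1 := by
        intro h
        apply hne
        rw [ss_eq_iff]
        simp
        omega
      exact zero_of q (L4 q hq (by omega)) (L3 q hq (by omega))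
  rcases eq_or_lt_of_le hkn with hkn' | hkn'
  · -- k = n : toggle out at (n,n) = (k,k)
    refine ⟨selt n k k hkpos le_rfl hkn, rfl, ?_, ?_⟩
    · apply one_of
      right
      refine ⟨L2 _ rfl (by simp), ⟨(hmem k hkpos hkn).2 le_rfl, ?_⟩⟩
      intro q hq _
      exfalso
      rw [ss_lt_iff] at hq
      obtain ⟨hb1, hb2, hb3⟩ := bounds q
      simp at hq
      omega
    · intro q hq hne
      obtain ⟨hb1, hb2, hb3⟩ := bounds q
      have hvv := diag_val hq
      have hval : q.1.1.val ≠ k := by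
        intro h
        apply hne
        rw [ss_eq_iff]
        simp
        omega
      exact zero_of q (L2 q hq (by omega)) (L1 q hq (by omega))
  · -- 1 ≤ k < n
    have hk1 : 1 ≤ k + 1 := by omega
    have hk1n : k + 1 ≤ n := by omega
    by_cases hout : CanTogOut I (selt n k k hkpos le_rfl (by omega))
    · -- toggle out at (k,k)
      refine ⟨selt n k k hkpos le_rfl (by omega), rfl, ?_, ?_⟩
      · exact one_of _ (Or.inr ⟨L2 _ rfl (by simp), hout⟩)
      · intro q hq hne
        obtain ⟨hb1, hb2, hb3⟩ := bounds q
        have hvv := diag_val hq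
        have hval : q.1.1.val ≠ k := by
          intro h
          apply hne
          rw [ss_eq_iff]
          simp
          omega
        rcases lt_trichotomy q.1.1.val k with h | h | h
        · exact zero_of q (L2 q hq (by omega)) (L1 q hq h)
        · omega
        · rcases eq_or_lt_of_le (Nat.succ_le_of_lt h) with h' | h'
          · -- value = k + 1 : CanTogIn fails because (k, k+1) ∉ I
            refine zero_of q ?_ (L3 q hq h)
            rintro ⟨_, hmin⟩
            have hr : selt n k (k+1) hkpos (by omega) hk1n ∈ I := by
              apply hmin
              rw [ss_lt_iff]
              simp
              omega
            refine hout.2 (selt n k (k+1) hkpos (by omega) hk1n) ?_ hr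
            rw [ss_lt_iff]
            simp
          · exact zero_of q (L4 q hq h') (L3 q hq h)
    · -- toggle in at (k+1, k+1)
      have hkin : selt n k k hkpos le_rfl (by omega) ∈ I := (hmem k hkpos (by omega)).2 le_rfl
      rw [CanTogOut] at hout
      push_neg at hout
      obtain ⟨r, hr1, hr2⟩ := hout hkin
      rw [ss_lt_iff] at hr1
      simp at hr1
      obtain ⟨c1, c2, _⟩ := bounds r
      have hr2nd : k + 1 ≤ r.1.2.val := by omega
      have hr1st : k ≤ r.1.1.val := by omega
      have htogin : CanTogIn I (selt n (k+1) (k+1) hk1 le_rfl hk1n) := by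
        refine ⟨?_, ?_⟩
        · rw [hmem (k+1) hk1 hk1n]; omega
        · intro q hq
          rw [ss_lt_iff] at hq
          simp at hq
          obtain ⟨hc1, hc2, _⟩ := bounds q
          exact hI (ss_le_iff.2 ⟨by omega, by omega⟩) hr2
      refine ⟨selt n (k+1) (k+1) hk1 le_rfl hk1n, rfl, ?_, ?_⟩
      · exact one_of _ (Or.inl ⟨htogin, L3 _ rfl (by simp)⟩)
      · intro q hq hne
        obtain ⟨hb1, hb2, hb3⟩ := bounds q
        have hvv := diag_val hq
        have hval : q.1.1.val ≠ k + 1 := by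
          intro h
          apply hne
          rw [ss_eq_iff]
          simp
          omega
        rcases lt_trichotomy q.1.1.val k with h | h | h
        · exact zero_of q (L2 q hq (by omega)) (L1 q hq h)
        · -- value = k : ¬ CanTogOut since r is above q and in I
          refine zero_of q (L2 q hq (by omega)) ?_
          rintro ⟨_, hmax⟩
          refine hmax r ?_ hr2
          rw [ss_lt_iff]
          exact ⟨⟨by omega, by omega⟩, by omega⟩
        · exact zero_of q (L4 q hq (by omega)) (L3 q hq (by omega))

end SSAux

/-- On the shifted staircase, for every order ideal `I`,
`∑_{i=1}^n (T⁺_{i,i}(I) + T⁻_{i,i}(I)) = 1`: exactly one diagonal element can be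
toggled into or out of `I`. -/
theorem shiftedStaircase_diagonal_toggle (n : ℕ) (hn : 1 ≤ n)
    (I : Finset (ShiftedStaircase n)) (hI : IsIdeal I) :
    ∑ p ∈ univ.filter (fun p : ShiftedStaircase n => p.1.1 = p.1.2),
        (Tin p I + Tout p I) = 1 := by
  classical
  set DI := (univ.filter (fun p : ShiftedStaircase n => p.1.1 = p.1.2)).filter (· ∈ I) with hDI
  set k := DI.sup (fun p => p.1.1.val) with hk
  have hkn : k ≤ n := by
    apply Finset.sup_le
    intro p _
    have := SSAux.bounds p
    omega
  have hmem : ∀ (m : ℕ) (h1 : 1 ≤ m) (h2 : m ≤ n),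
      (SSAux.selt n m m h1 le_rfl h2 ∈ I ↔ m ≤ k) := by
    intro m h1 h2
    constructor
    · intro hmI
      have hmem' : SSAux.selt n m m h1 le_rfl h2 ∈ DI := by
        simp only [hDI, Finset.mem_filter, Finset.mem_univ, true_and]
        exact ⟨rfl, hmI⟩
      exact Finset.le_sup (f := fun p : ShiftedStaircase n => p.1.1.val) hmem'
    · intro hmk
      rcases DI.eq_empty_or_nonempty with he | hne
      · rw [hk, he] at hmk
        simp at hmk
        omega
      · obtain ⟨q, hqDI, hq⟩ := Finset.exists_mem_eq_sup DI hne (fun p : ShiftedStaircase n => p.1.1.val)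
        simp only [hDI, Finset.mem_filter, Finset.mem_univ, true_and] at hqDI
        obtain ⟨hqdiag, hqI⟩ := hqDI
        refine hI (y := q) ?_ hqI
        rw [SSAux.ss_le_iff]
        have hvv := SSAux.diag_val hqdiag
        rw [hk, hq] at hmk
        exact ⟨by simpa using hmk, by simp; omega⟩
  obtain ⟨p₀, hp₀d, hp₀1, hp₀0⟩ := SSAux.key I hI hn k hkn hmem
  rw [Finset.sum_eq_single_of_mem p₀ (by simp [hp₀d])
    (fun q hq hne => hp₀0 q (by simpa using hq) hne), hp₀1]
end

section
/- Let P be a finite poset. The ℝ-vector space of functions J(P) → ℝ whose sum over every rowmotion orbit is zero equals the span of the antichain signed toggleability statistics {T_A : A an antichain of P}, where T_A(I) = 1 if A ⊆ min(P\I), minus 1 if A ⊆ max(I) (and 0 if both or neither hold). -/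
open scoped Classical
open Finset

variable {P : Type*} [Fintype P] [PartialOrder P]

/-- The type of order ideals of `P`. -/
abbrev OrderIdealType (P : Type*) [Fintype P] [PartialOrder P] := {I : Finset P // IsIdeal I}

/-- Rowmotion as a map on order ideals. -/
noncomputable def rowIdeal (I : OrderIdealType P) : OrderIdealType P :=
  ⟨rowmotion I.1, by
    intro x y hxy hy
    simp only [rowmotion, mem_filter, mem_univ, true_and] at hy ⊢
    obtain ⟨z, hz, hle⟩ := hy
    exact ⟨z, hz, hxy.trans hle⟩⟩

/-- The antichain signed toggleability statistic `T_A = T⁺_A - T⁻_A`, where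
`T⁺_A(I) = 1` iff `A ⊆ min(P\I)` and `T⁻_A(I) = 1` iff `A ⊆ max(I)`. -/
noncomputable def TA (A : Finset P) (I : OrderIdealType P) : ℝ :=
  (if ∀ p ∈ A, CanTogIn I.1 p then 1 else 0) - (if ∀ p ∈ A, CanTogOut I.1 p then 1 else 0)

lemma togOut_rowmotion (I : Finset P) (p : P) :
    CanTogOut (rowmotion I) p ↔ CanTogIn I p := by
  constructor
  · rintro ⟨hp, hmax⟩
    simp only [rowmotion, mem_filter, mem_univ, true_and] at hp
    obtain ⟨y, hy, hle⟩ := hp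
    rcases eq_or_lt_of_le hle with rfl | hlt
    · exact hy
    · refine absurd ?_ (hmax y hlt)
      simp only [rowmotion, mem_filter, mem_univ, true_and]
      exact ⟨y, hy, le_refl y⟩
  · rintro ⟨hp, hmin⟩
    constructor
    · simp only [rowmotion, mem_filter, mem_univ, true_and]
      exact ⟨p, ⟨hp, hmin⟩, le_refl p⟩
    · intro q hq hqmem
      simp only [rowmotion, mem_filter, mem_univ, true_and] at hqmem
      obtain ⟨y, hy, hle⟩ := hqmem
      exact hp (hy.2 p (lt_of_lt_of_le hq hle))

lemma notMem_iff_togIn {I : Finset P} (hI : IsIdeal I) (x : P) :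
    x ∉ I ↔ ∃ p, CanTogIn I p ∧ p ≤ x := by
  constructor
  · intro hx
    have hne : (univ.filter fun z => z ∉ I ∧ z ≤ x).Nonempty :=
      ⟨x, by simp [hx]⟩
    obtain ⟨m, hm, hmin⟩ : ∃ m ∈ (univ.filter fun z => z ∉ I ∧ z ≤ x),
        ∀ y ∈ (univ.filter fun z => z ∉ I ∧ z ≤ x), ¬y < m := by
      obtain ⟨m, hm⟩ := Finset.exists_minimal hne
      exact ⟨m, hm.1, fun y hy hlt => hm.not_lt hy hlt⟩
    simp only [mem_filter, mem_univ, true_and] at hm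
    refine ⟨m, ⟨hm.1, fun q hq => ?_⟩, hm.2⟩
    by_contra hq'
    exact hmin q (by simp [hq', le_of_lt (lt_of_lt_of_le hq hm.2)]) hq
  · rintro ⟨p, ⟨hp, _⟩, hle⟩ hx
    exact hp (hI hle hx)

lemma mem_iff_togOut {I : Finset P} (hI : IsIdeal I) (x : P) :
    x ∈ I ↔ ∃ p, CanTogOut I p ∧ x ≤ p := by
  constructor
  · intro hx
    have hne : (I.filter fun z => x ≤ z).Nonempty := ⟨x, by simp [hx]⟩
    obtain ⟨m, hm, hmax⟩ : ∃ m ∈ (I.filter fun z => x ≤ z),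
        ∀ y ∈ (I.filter fun z => x ≤ z), ¬m < y := by
      obtain ⟨m, hm⟩ := Finset.exists_maximal hne
      exact ⟨m, hm.1, fun y hy hlt => hm.not_gt hy hlt⟩
    simp only [mem_filter] at hm
    refine ⟨m, ⟨hm.1, fun q hq hq' => ?_⟩, hm.2⟩
    exact hmax q (by simp [hq', le_of_lt (lt_of_le_of_lt hm.2 hq)]) hq
  · rintro ⟨p, ⟨hp, _⟩, hle⟩
    exact hI hle hp

lemma ideal_eq_of_togIn {I J : OrderIdealType P}
    (h : ∀ p, CanTogIn I.1 p ↔ CanTogIn J.1 p) : I = J := by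
  refine Subtype.ext ?_
  ext x
  rw [← not_iff_not, notMem_iff_togIn I.2, notMem_iff_togIn J.2]
  exact exists_congr fun p => and_congr_left fun _ => h p

lemma ideal_eq_of_togOut {I J : OrderIdealType P}
    (h : ∀ p, CanTogOut I.1 p ↔ CanTogOut J.1 p) : I = J := by
  refine Subtype.ext ?_
  ext x
  rw [mem_iff_togOut I.2, mem_iff_togOut J.2]
  exact exists_congr fun p => and_congr_left fun _ => h p

lemma rowIdeal_injective : Function.Injective (rowIdeal (P := P)) := by
  intro I J h
  refine ideal_eq_of_togIn fun p => ?_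
  rw [← togOut_rowmotion I.1 p, ← togOut_rowmotion J.1 p]
  have : (rowIdeal I).1 = (rowIdeal J).1 := congrArg _ h
  simp only [rowIdeal] at this
  rw [this]

lemma rowIdeal_bijective : Function.Bijective (rowIdeal (P := P)) :=
  Finite.injective_iff_bijective.1 rowIdeal_injective

/-- the set of maximal elements of I -/
noncomputable def maxSet (I : Finset P) : Finset P := univ.filter fun p => CanTogOut I p

lemma maxSet_antichain (I : Finset P) : IsAntichain (· ≤ ·) (maxSet I : Set P) := by
  intro p hp q hq hne hle
  simp only [maxSet, coe_filter, Set.mem_setOf_eq, mem_univ, true_and] at hp hq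
  exact hp.2 q (lt_of_le_of_ne hle hne) hq.1

/-- coboundary of indicator of J -/
noncomputable def cJ (J I : OrderIdealType P) : ℝ :=
  (if rowIdeal I = J then 1 else 0) - (if I = J then 1 else 0)

lemma subset_maxSet_iff (A I : Finset P) :
    A ⊆ maxSet I ↔ ∀ p ∈ A, CanTogOut I p := by
  simp [maxSet, Finset.subset_iff]

lemma TA_eq_sum_cJ (A : Finset P) (I : OrderIdealType P) :
    TA A I = ∑ J ∈ univ.filter (fun J : OrderIdealType P => A ⊆ maxSet J.1), cJ J I := by
  unfold cJ
  rw [Finset.sum_sub_distrib, Finset.sum_ite_eq, Finset.sum_ite_eq]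
  simp only [mem_filter, mem_univ, true_and]
  unfold TA
  congr 1
  · congr 1
    rw [eq_iff_iff]
    rw [subset_maxSet_iff]
    constructor
    · intro h p hp
      exact (togOut_rowmotion I.1 p).2 (h p hp)
    · intro h p hp
      exact (togOut_rowmotion I.1 p).1 (h p hp)
  · congr 1
    rw [eq_iff_iff, subset_maxSet_iff]

lemma cJ_mem_span (J : OrderIdealType P) :
    cJ J ∈ Submodule.span ℝ {g : OrderIdealType P → ℝ |
      ∃ A : Finset P, IsAntichain (· ≤ ·) (A : Set P) ∧ g = TA A} := by
  set S := Submodule.span ℝ {g : OrderIdealType P → ℝ |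
      ∃ A : Finset P, IsAntichain (· ≤ ·) (A : Set P) ∧ g = TA A} with hS
  suffices H : ∀ n (J : OrderIdealType P), Fintype.card P - (maxSet J.1).card ≤ n → cJ J ∈ S from
    H _ J le_rfl
  intro n
  induction n using Nat.strong_induction_on with
  | _ n IH =>
    intro J hn
    set A := maxSet J.1 with hA
    set Ω := univ.filter (fun J' : OrderIdealType P => A ⊆ maxSet J'.1) with hΩ
    have hJΩ : J ∈ Ω := by simp [hΩ, hA]
    have key : cJ J = TA A - ∑ J' ∈ Ω.erase J, cJ J' := by
      funext I
      have := TA_eq_sum_cJ A I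
      rw [← Finset.add_sum_erase _ _ hJΩ] at this
      simp only [Pi.sub_apply, Finset.sum_apply]
      linarith [this]
    rw [key]
    refine Submodule.sub_mem _ (Submodule.subset_span ⟨A, maxSet_antichain _, rfl⟩) ?_
    have : (∑ J' ∈ Ω.erase J, cJ J') = ∑ J' ∈ Ω.erase J, cJ J' := rfl
    refine Submodule.sum_mem _ fun J' hJ' => ?_
    rw [Finset.mem_erase, hΩ, mem_filter] at hJ'
    obtain ⟨hne, -, hsub⟩ := hJ'
    have hssub : A ⊂ maxSet J'.1 := by
      refine lt_of_le_of_ne hsub fun heq => hne ?_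
      refine ideal_eq_of_togOut fun p => ?_
      have : maxSet J'.1 = maxSet J.1 := heq.symm
      constructor
      · intro hp
        have : p ∈ maxSet J.1 := by rw [← this]; simp [maxSet, hp]
        simpa [maxSet] using this
      · intro hp
        have : p ∈ maxSet J'.1 := by rw [this]; simp [maxSet, hp]
        simpa [maxSet] using this
    have hcard : A.card < (maxSet J'.1).card := Finset.card_lt_card hssub
    have hlt : Fintype.card P - (maxSet J'.1).card < n := by
      have h1 : A.card < Fintype.card P :=
        lt_of_lt_of_le hcard (Finset.card_le_univ _)
      have := Nat.sub_lt_sub_left h1 hcard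
      omega
    exact IH _ hlt J' le_rfl

lemma mesic_of_cobound (g u : OrderIdealType P → ℝ)
    (hg : ∀ I, g I = u (rowIdeal I) - u I) (I : OrderIdealType P) (N : ℕ)
    (hN : rowIdeal^[N] I = I) : ∑ k ∈ Finset.range N, g (rowIdeal^[k] I) = 0 := by
  have : ∀ k, g (rowIdeal^[k] I) =
      u (rowIdeal^[k+1] I) - u (rowIdeal^[k] I) := by
    intro k
    rw [hg, Function.iterate_succ_apply']
  calc ∑ k ∈ Finset.range N, g (rowIdeal^[k] I)
      = ∑ k ∈ Finset.range N, (u (rowIdeal^[k+1] I) - u (rowIdeal^[k] I)) := by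
        exact Finset.sum_congr rfl fun k _ => this k
    _ = u (rowIdeal^[N] I) - u (rowIdeal^[0] I) := Finset.sum_range_sub (fun k => u (rowIdeal^[k] I)) N
    _ = 0 := by rw [hN]; simp

lemma TA_cobound (A : Finset P) (I : OrderIdealType P) :
    TA A I = (if ∀ p ∈ A, CanTogOut (rowIdeal I).1 p then (1:ℝ) else 0)
      - (if ∀ p ∈ A, CanTogOut I.1 p then 1 else 0) := by
  unfold TA
  congr 1
  congr 1
  rw [eq_iff_iff]
  constructor
  · intro h p hp; exact (togOut_rowmotion I.1 p).2 (h p hp)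
  · intro h p hp; exact (togOut_rowmotion I.1 p).1 (h p hp)

/-- abel-summation style computation -/
lemma abel_aux (g : ℕ → ℝ) (n : ℕ) :
    ∑ k ∈ Finset.range n, (k : ℝ) * (g (k+1) - g k)
      = ((n:ℝ) - 1) * g n + g 0 - ∑ k ∈ Finset.range n, g k := by
  induction n with
  | zero => simp
  | succ n ih =>
    rw [Finset.sum_range_succ, ih, Finset.sum_range_succ]
    push_cast
    ring

/-- The space of statistics `J(P) → ℝ` that sum to zero over every rowmotion orbit
equals the span of the antichain signed toggleability statistics `T_A`. -/
theorem zero_mesic_eq_span_antichain_toggleability :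
    {f : OrderIdealType P → ℝ | ∀ (I : OrderIdealType P) (N : ℕ), 0 < N →
        rowIdeal^[N] I = I → ∑ k ∈ Finset.range N, f (rowIdeal^[k] I) = 0}
      = ↑(Submodule.span ℝ {g : OrderIdealType P → ℝ |
          ∃ A : Finset P, IsAntichain (· ≤ ·) (A : Set P) ∧ g = TA A}) := by
  ext f
  simp only [Set.mem_setOf_eq, SetLike.mem_coe]
  constructor
  · -- mesic → span
    intro hf
    -- get a global period
    obtain ⟨N, hNpos, hNid⟩ : ∃ N, 0 < N ∧ ∀ I : OrderIdealType P, rowIdeal^[N] I = I := by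
      set e : Equiv.Perm (OrderIdealType P) := Equiv.ofBijective _ rowIdeal_bijective with he
      obtain ⟨N, hNpos, hN⟩ := (isOfFinOrder_iff_pow_eq_one).1 (isOfFinOrder_of_finite e)
      refine ⟨N, hNpos, fun I => ?_⟩
      have h1 : (e ^ N) I = I := by rw [hN]; rfl
      have h2 : rowIdeal^[N] I = (e ^ N) I := rfl
      rw [h2, h1]
    set h : OrderIdealType P → ℝ :=
      fun I => ∑ k ∈ Finset.range N, ((k:ℝ)/N) * f (rowIdeal^[k] I) with hh
    have hNR : (N:ℝ) ≠ 0 := Nat.cast_ne_zero.2 hNpos.ne'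
    have hcob : ∀ I, f I = h (rowIdeal I) - h I := by
      intro I
      have hg0 : f (rowIdeal^[N] I) = f I := by rw [hNid I]
      have hsum : ∑ k ∈ Finset.range N, f (rowIdeal^[k] I) = 0 := hf I N hNpos (hNid I)
      have habel := abel_aux (fun k => f (rowIdeal^[k] I)) N
      simp only [hh]
      have hshift : ∀ k, f (rowIdeal^[k] (rowIdeal I)) = f (rowIdeal^[k+1] I) := by
        intro k; rw [Function.iterate_succ_apply]
      calc f I = (1/N) * ∑ k ∈ Finset.range N,
            (k : ℝ) * (f (rowIdeal^[k+1] I) - f (rowIdeal^[k] I)) := by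
            rw [habel, hg0, hsum]
            field_simp
            simp only [Function.iterate_zero_apply]
            ring
        _ = ∑ k ∈ Finset.range N, ((k:ℝ)/N) * f (rowIdeal^[k] (rowIdeal I))
            - ∑ k ∈ Finset.range N, ((k:ℝ)/N) * f (rowIdeal^[k] I) := by
            rw [Finset.mul_sum, ← Finset.sum_sub_distrib]
            refine Finset.sum_congr rfl fun k _ => ?_
            rw [hshift k]
            field_simp
    have hfeq : f = ∑ J ∈ (univ : Finset (OrderIdealType P)), h J • cJ J := by
      funext I
      rw [Finset.sum_apply]
      simp only [Pi.smul_apply, smul_eq_mul, cJ]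
      have : ∀ J ∈ (univ : Finset (OrderIdealType P)),
          h J * ((if rowIdeal I = J then (1:ℝ) else 0) - (if I = J then 1 else 0))
          = (if rowIdeal I = J then h J else 0) - (if I = J then h J else 0) := by
        intro J _
        split_ifs <;> ring
      rw [Finset.sum_congr rfl this, Finset.sum_sub_distrib,
        Finset.sum_ite_eq, Finset.sum_ite_eq]
      simp [hcob I]
    rw [hfeq]
    exact Submodule.sum_mem _ fun J _ => Submodule.smul_mem _ _ (cJ_mem_span J)
  · -- span → mesic
    intro hf
    induction hf using Submodule.span_induction with
    | mem g hg =>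
      obtain ⟨A, -, rfl⟩ := hg
      intro I N hN hNI
      exact mesic_of_cobound _ (fun I => if ∀ p ∈ A, CanTogOut I.1 p then (1:ℝ) else 0)
        (fun I => TA_cobound A I) I N hNI
    | zero => intro I N hN hNI; simp
    | add g₁ g₂ _ _ h1 h2 =>
      intro I N hN hNI
      simp only [Pi.add_apply, Finset.sum_add_distrib]
      rw [h1 I N hN hNI, h2 I N hN hNI, add_zero]
    | smul c g _ hg =>
      intro I N hN hNI
      simp only [Pi.smul_apply, smul_eq_mul, ← Finset.mul_sum]
      rw [hg I N hN hNI, mul_zero]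
end
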